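/- The corrector 𝒢̃ satisfies the symmetrisation identity 𝒢̃(m,s) + 𝒢̃(s,x̂) = 𝒢̃(s,m) + 𝒢̃(m,x̂) for all m, s ∈ Λ; consequently the function 𝒢̄(m,s) := 𝒢̃(m,s) + 𝒢̃(s,x̂) is symmetric, 𝒢̄(m,s) = 𝒢̄(s,m), and satisfies the same variational equation in each variable as 𝒢̃. -/

import Mathlib

open Filter Topology

noncomputable section

/-- Lattice sites of `Λ = ℤ² − (1/2,1/2)` are indexed by `ℤ²`. -/
abbrev Z2 := ℤ × ℤ

/-- The nearest-neighbour directions `ℛ = {e₁, e₂, −e₁, −e₂}`. -/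
def Rall : Finset Z2 := {((1:ℤ),(0:ℤ)), (0,1), (-1,0), (0,-1)}

/-- The crack-adjusted stencil `ℛ(m)`: the lattice site indexed by `l ∈ ℤ²` sits at
`latpos l = l − (1/2,1/2)`, so it lies on `Γ₊` iff `l.1 ≤ 0 ∧ l.2 = 1` (where `e₂` points
away from the crack and `−e₂` is erased), and on `Γ₋` iff `l.1 ≤ 0 ∧ l.2 = 0` (where `e₂`
is erased). -/
def Rm (m : Z2) : Finset Z2 :=
  if m.1 ≤ 0 ∧ m.2 = 1 then Rall.erase (0,-1)
  else if m.1 ≤ 0 ∧ m.2 = 0 then Rall.erase (0,1)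
  else Rall

/-- Discrete gradient component `(Du(m))_ρ`. -/
def Dg (u : Z2 → ℝ) (m ρ : Z2) : ℝ :=
  if ρ ∈ Rm m then u (m + ρ) - u m else 0

/-- `|Du(m)|²`. -/
def gradSq (u : Z2 → ℝ) (m : Z2) : ℝ := ∑ ρ ∈ Rall, (Dg u m ρ) ^ 2

/-- The index of the distinguished lattice site `x̂ = (1/2,1/2)`. -/
def xhat : Z2 := (1, 1)

/-- Membership in the discrete energy space `ℋ¹`: `Du ∈ ℓ²` and `u(x̂) = 0`. -/
def memH1 (u : Z2 → ℝ) : Prop := Summable (gradSq u) ∧ u xhat = 0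

/-- `‖u‖_{ℋ¹} = ‖Du‖_{ℓ²}`. -/
def H1norm (u : Z2 → ℝ) : ℝ := Real.sqrt (∑' m, gradSq u m)

/-- Euclidean norm on `ℝ²`. -/
def nrm (x : ℝ × ℝ) : ℝ := Real.sqrt (x.1 ^ 2 + x.2 ^ 2)

/-- The crack set `Γ₀ = {(x₁,0) : x₁ ≤ 0}`. -/
def Gamma0 : Set (ℝ × ℝ) := {x | x.1 ≤ 0 ∧ x.2 = 0}

/-- Position in `ℝ²` of the lattice site indexed by `l ∈ ℤ²`. -/
def latpos (l : Z2) : ℝ × ℝ := ((l.1 : ℝ) - 1/2, (l.2 : ℝ) - 1/2)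

/-- The complex square root map `ω`, in polar coordinates with `θ = arg ∈ (−π,π]`:
`ω(x) = (√r cos(θ/2), √r sin(θ/2))`. -/
def omegaMap (x : ℝ × ℝ) : ℝ × ℝ :=
  (Real.sqrt (nrm x) * Real.cos (Complex.arg ((x.1 : ℂ) + (x.2 : ℂ) * Complex.I) / 2),
   Real.sqrt (nrm x) * Real.sin (Complex.arg ((x.1 : ℂ) + (x.2 : ℂ) * Complex.I) / 2))

/-- The reflection `ω*` of `ω` through the vertical axis. -/
def omegaStar (x : ℝ × ℝ) : ℝ × ℝ := (-(omegaMap x).1, (omegaMap x).2)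

/-- The continuum Green's function for the crack geometry (with `C_Λ = 2`):
`Ĝ(x,s) = −(1/(2π·2)) [log|ω(x) − ω(s)| + log|ω(x) − ω*(s)|]`. -/
def Ghat (x s : ℝ × ℝ) : ℝ :=
  -(1 / (2 * Real.pi * 2)) *
    (Real.log (nrm (omegaMap x - omegaMap s)) + Real.log (nrm (omegaMap x - omegaStar s)))

/-- The discrete predictor `𝒢̂(m,s) := Ĝ(m,s)` for `m ≠ s`, `𝒢̂(s,s) := 0`. -/
def GhatD (m s : Z2) : ℝ := if m = s then 0 else Ghat (latpos m) (latpos s)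

/-- `(D₁𝒢̂(m,s))_ρ`, the discrete gradient of the predictor in its first variable. -/
def DgPred (s : Z2) (m ρ : Z2) : ℝ := Dg (fun m' => GhatD m' s) m ρ

/-- The variational (Euler–Lagrange) equation for the corrector:
`Σ_m [(D₁𝒢̂(m,s) + DF(m))·Dv(m) − δ_{ms} v(m)] = 0` for all `v ∈ ℋ¹`. -/
def varEq (s : Z2) (F : Z2 → ℝ) : Prop :=
  ∀ v : Z2 → ℝ, memH1 v →
    HasSum
      (fun m => (∑ ρ ∈ Rall, (DgPred s m ρ + Dg F m ρ) * Dg v m ρ) - (if m = s then v m else 0))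
      0

/-!
Write `𝒢 := 𝒢̂ + 𝒢̃` for the full Green's function, so that the variational equation reads
`∑ₘ D𝒢(·,s)(m) · Dv(m) = v(s)` for `v ∈ ℋ¹`. The differences `w_a := 𝒢(·,a) − 𝒢(·,x̂)`,
normalised to vanish at `x̂`, lie in `ℋ¹`: for the predictor part, `ω` maps the two poles to
nearby points seen from far away, so `D(𝒢̂(·,a) − 𝒢̂(·,x̂))(m) = O(|m|^{-3/2})`, which is square
summable on `ℤ²` (bonds are kept off the crack, where `ω` is smooth). Testing the equation of `s`
with `w_t`, that of `t` with `w_s` and that of `x̂` with `w_t − w_s`, the symmetric Dirichlet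
form cancels and leaves `w_t(s) = w_s(t)`; with `𝒢̂` symmetric and `𝒢̃(x̂,·) = 0` this is the
identity. Adding the constant `𝒢̃(s,x̂)` changes neither the energy nor the equation.
-/

lemma Dg_add (u v : Z2 → ℝ) (m ρ : Z2) :
    Dg (fun m' => u m' + v m') m ρ = Dg u m ρ + Dg v m ρ := by
  unfold Dg; split <;> ring

lemma Dg_sub (u v : Z2 → ℝ) (m ρ : Z2) :
    Dg (fun m' => u m' - v m') m ρ = Dg u m ρ - Dg v m ρ := by
  unfold Dg; split <;> ring

lemma Dg_add_const (u : Z2 → ℝ) (c : ℝ) (m ρ : Z2) :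
    Dg (fun m' => u m' + c) m ρ = Dg u m ρ := by
  unfold Dg; split <;> ring

lemma gradSq_add_const (u : Z2 → ℝ) (c : ℝ) : gradSq (fun m' => u m' + c) = gradSq u := by
  ext m; simp only [gradSq, Dg_add_const]

lemma gradSq_nonneg (u : Z2 → ℝ) (m : Z2) : 0 ≤ gradSq u m :=
  Finset.sum_nonneg fun _ _ => sq_nonneg _

lemma gradSq_sub_le (u v : Z2 → ℝ) (m : Z2) :
    gradSq (fun m' => u m' - v m') m ≤ 2 * gradSq u m + 2 * gradSq v m := by
  simp only [gradSq, Finset.mul_sum, ← Finset.sum_add_distrib, Dg_sub]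
  exact Finset.sum_le_sum fun ρ _ => by nlinarith [sq_nonneg (Dg u m ρ + Dg v m ρ)]

lemma Summable.gradSq_sub {u v : Z2 → ℝ} (hu : Summable (gradSq u)) (hv : Summable (gradSq v)) :
    Summable (gradSq (fun m => u m - v m)) :=
  .of_nonneg_of_le (gradSq_nonneg _) (gradSq_sub_le u v) ((hu.mul_left 2).add (hv.mul_left 2))

lemma gradSq_neg (v : Z2 → ℝ) : gradSq (fun m' => -v m') = gradSq v := by
  ext m; refine Finset.sum_congr rfl fun ρ _ => ?_
  unfold Dg; split <;> ring

lemma Summable.gradSq_add {u v : Z2 → ℝ} (hu : Summable (gradSq u)) (hv : Summable (gradSq v)) :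
    Summable (gradSq (fun m => u m + v m)) := by
  simpa using hu.gradSq_sub (v := fun m => -v m) (by rwa [gradSq_neg])

def dotD (u v : Z2 → ℝ) (m : Z2) : ℝ := ∑ ρ ∈ Rall, Dg u m ρ * Dg v m ρ

lemma varEq.hasSum_dotD {s : Z2} {F : Z2 → ℝ} (hF : varEq s F) {v : Z2 → ℝ} (hv : memH1 v) :
    HasSum (dotD (fun m => GhatD m s + F m) v) (v s) := by
  convert (hF v hv).add (hasSum_single (f := fun m => if m = s then v m else 0) s
    fun m hm => if_neg hm) using 1
  · ext m; simp [dotD, DgPred, Dg_add]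
  · simp

lemma varEq_add_const {s : Z2} {F : Z2 → ℝ} (hF : varEq s F) (c : ℝ) :
    varEq s (fun m => F m + c) := by
  simpa only [varEq, Dg_add_const] using hF

lemma green_diff_symm (G : Z2 → Z2 → ℝ)
    (hG : ∀ s v, memH1 v → HasSum (dotD (fun m => G m s) v) (v s))
    (hfin : ∀ a, Summable (gradSq (fun m => G m a - G m xhat))) (s t : Z2) :
    G s t - G s xhat - G xhat t + G xhat xhat = G t s - G t xhat - G xhat s + G xhat xhat := by
  set w : Z2 → Z2 → ℝ := fun a m => G m a - G m xhat + (G xhat xhat - G xhat a) with hw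
  have hDw : ∀ a m ρ, Dg (w a) m ρ = Dg (fun m => G m a) m ρ - Dg (fun m => G m xhat) m ρ :=
    fun a m ρ => by rw [hw, Dg_add_const, Dg_sub]
  have hw_xhat : ∀ a, w a xhat = 0 := fun a => by simp only [hw]; ring
  have hwH1 : ∀ a, memH1 (w a) :=
    fun a => ⟨by simpa only [hw, gradSq_add_const] using hfin a, hw_xhat a⟩
  have hdiffH1 : memH1 (fun m => w t m - w s m) :=
    ⟨(hwH1 t).1.gradSq_sub (hwH1 s).1, by simp [hw_xhat]⟩
  have hsum := (((hG s _ (hwH1 t)).sub (hG t _ (hwH1 s))).sub (hG xhat _ hdiffH1))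
  -- `B(G_s, G_t − G_x̂) − B(G_t, G_s − G_x̂) − B(G_x̂, G_t − G_s) = 0` for the symmetric form `B`.
  have hzero : (fun m => dotD (fun m => G m s) (w t) m - dotD (fun m => G m t) (w s) m -
      dotD (fun m => G m xhat) (fun m => w t m - w s m) m) = 0 := by
    ext m
    simp only [dotD, ← Finset.sum_sub_distrib, Dg_sub, hDw, Pi.zero_apply]
    exact Finset.sum_eq_zero fun ρ _ => by ring
  rw [hzero, hw_xhat, hw_xhat] at hsum
  have := hsum.unique hasSum_zero
  simp only [hw] at this
  linarith

namespace Complex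

def csqrt (z : ℂ) : ℂ := z ^ (1 / 2 : ℂ)

lemma norm_csqrt (z : ℂ) : ‖csqrt z‖ = √‖z‖ := by
  rw [csqrt, show (1 / 2 : ℂ) = ((1 / 2 : ℝ) : ℂ) by norm_num, norm_cpow_real,
    Real.sqrt_eq_rpow]

lemma norm_csqrt_sub_le {z w : ℂ} {R : ℝ} (hR : 0 < R) (hseg : segment ℝ z w ⊆ slitPlane)
    (hRy : ∀ y ∈ segment ℝ z w, R ≤ ‖y‖) : ‖csqrt w - csqrt z‖ ≤ ‖w - z‖ / (2 * √R) := by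
  have hderiv : ∀ y ∈ segment ℝ z w,
      HasDerivWithinAt csqrt (1 / 2 * y ^ (1 / 2 - 1 : ℂ)) (segment ℝ z w) y :=
    fun y hy => (hasStrictDerivAt_cpow_const (hseg hy)).hasDerivAt.hasDerivWithinAt
  have hbound : ∀ y ∈ segment ℝ z w, ‖1 / 2 * y ^ (1 / 2 - 1 : ℂ)‖ ≤ 1 / (2 * √R) := by
    intro y hy
    have hy0 : 0 < ‖y‖ := hR.trans_le (hRy y hy)
    rw [show (1 / 2 - 1 : ℂ) = ((-(1 / 2) : ℝ) : ℂ) by norm_num, norm_mul, norm_cpow_real,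
      Real.rpow_neg hy0.le, ← Real.sqrt_eq_rpow]
    have : √R ≤ √‖y‖ := Real.sqrt_le_sqrt (hRy y hy)
    have : 0 < √R := Real.sqrt_pos.2 hR
    simp only [one_div, norm_inv, RCLike.norm_ofNat]
    rw [← mul_inv]
    gcongr
  have := (convex_segment z w).norm_image_sub_le_of_norm_hasDerivWithin_le hderiv hbound
    (left_mem_segment ℝ z w) (right_mem_segment ℝ z w)
  rwa [one_div_mul_eq_div] at this

end Complex

open Complex ComplexConjugate

def logRatio (a b u : ℂ) : ℝ := Real.log ‖u - a‖ - Real.log ‖u - b‖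

lemma abs_log_sub_log_le {x y : ℝ} (hx : 1 / 2 ≤ x) (hy : 1 / 2 ≤ y) :
    |Real.log x - Real.log y| ≤ 2 * |x - y| := by
  have key : ∀ {x y : ℝ}, 1 / 2 ≤ x → 1 / 2 ≤ y → Real.log x - Real.log y ≤ 2 * |x - y| := by
    intro x y hx hy
    rw [← Real.log_div (by positivity) (by positivity)]
    refine (Real.log_le_sub_one_of_pos (by positivity)).trans ?_
    rw [div_sub_one (by positivity), div_le_iff₀ (by positivity)]
    nlinarith [le_abs_self (x - y), abs_nonneg (x - y)]
  rw [abs_le]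
  exact ⟨by linarith [key hy hx, abs_sub_comm x y], key hx hy⟩

lemma half_norm_le_norm_sub {E : Type*} [SeminormedAddCommGroup E] {u b : E}
    (h : 2 * ‖b‖ ≤ ‖u‖) : ‖u‖ / 2 ≤ ‖u - b‖ := by
  linarith [norm_sub_norm_le u b]

/-- Far from `a` and `b`, `logRatio a b = log |1 − q|` with `q = (a − b)/(u − b)` small, which
gains the factor `|a − b|` over the Lipschitz bound of each logarithm separately. -/
lemma abs_logRatio_sub_le {a b u u' : ℂ} (hu : 8 * max ‖a‖ ‖b‖ < ‖u‖)
    (hu' : 8 * max ‖a‖ ‖b‖ < ‖u'‖) :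
    |logRatio a b u' - logRatio a b u| ≤ 8 * ‖a - b‖ * ‖u' - u‖ / (‖u‖ * ‖u'‖) := by
  have hab : ‖a - b‖ ≤ 2 * max ‖a‖ ‖b‖ := by
    linarith [norm_sub_le a b, le_max_left ‖a‖ ‖b‖, le_max_right ‖a‖ ‖b‖]
  have hM : 0 ≤ max ‖a‖ ‖b‖ := (norm_nonneg a).trans (le_max_left _ _)
  have far : ∀ v : ℂ, 8 * max ‖a‖ ‖b‖ < ‖v‖ →
      ‖v‖ / 2 ≤ ‖v - b‖ ∧ logRatio a b v = Real.log ‖1 - (a - b) / (v - b)‖ ∧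
        1 / 2 ≤ ‖1 - (a - b) / (v - b)‖ := by
    intro v hv
    have hvb : ‖v‖ / 2 ≤ ‖v - b‖ :=
      half_norm_le_norm_sub (by linarith [le_max_right ‖a‖ ‖b‖])
    have hvb0 : v - b ≠ 0 := norm_pos_iff.1 (by linarith)
    have hva0 : v - a ≠ 0 := norm_pos_iff.1
      (by linarith [half_norm_le_norm_sub (u := v) (b := a) (by linarith [le_max_left ‖a‖ ‖b‖])])
    have hq : ‖(a - b) / (v - b)‖ ≤ 1 / 2 := by
      rw [norm_div, div_le_iff₀ (by linarith)]
      linarith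
    refine ⟨hvb, ?_, ?_⟩
    · rw [show 1 - (a - b) / (v - b) = (v - a) / (v - b) by field_simp; ring, norm_div,
        Real.log_div (norm_ne_zero_iff.2 hva0) (norm_ne_zero_iff.2 hvb0), logRatio]
    · linarith [norm_sub_norm_le (1 : ℂ) ((a - b) / (v - b)), norm_one (α := ℂ)]
  obtain ⟨hub, hu_eq, hu_half⟩ := far u hu
  obtain ⟨hub', hu'_eq, hu'_half⟩ := far u' hu'
  have hu0 : 0 < ‖u‖ := by linarith
  have hu'0 : 0 < ‖u'‖ := by linarith
  have hdiff : (1 - (a - b) / (u' - b)) - (1 - (a - b) / (u - b)) =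
      (a - b) * (u' - u) / ((u - b) * (u' - b)) := by
    have : u - b ≠ 0 := norm_pos_iff.1 (by linarith)
    have : u' - b ≠ 0 := norm_pos_iff.1 (by linarith)
    field_simp; ring
  rw [hu_eq, hu'_eq]
  calc _ ≤ 2 * |‖1 - (a - b) / (u' - b)‖ - ‖1 - (a - b) / (u - b)‖| :=
        abs_log_sub_log_le hu'_half hu_half
    _ ≤ 2 * (‖a - b‖ * ‖u' - u‖ / (‖u - b‖ * ‖u' - b‖)) := by
        gcongr
        refine (abs_norm_sub_norm_le _ _).trans_eq ?_
        rw [hdiff, norm_div, norm_mul, norm_mul]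
    _ ≤ 2 * (‖a - b‖ * ‖u' - u‖ / (‖u‖ / 2 * (‖u'‖ / 2))) := by gcongr
    _ = 8 * ‖a - b‖ * ‖u' - u‖ / (‖u‖ * ‖u'‖) := by field_simp; ring

lemma abs_logRatio_csqrt_sub_le {a b z w : ℂ} (hseg : segment ℝ z w ⊆ slitPlane)
    (hzw : ‖w - z‖ ≤ 1) (hz : 2 * (8 * max ‖a‖ ‖b‖ + 1) ^ 2 ≤ ‖z‖) :
    |logRatio a b (csqrt w) - logRatio a b (csqrt z)| ≤ 8 * ‖a - b‖ / (‖z‖ * √‖z‖) := by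
  set r := ‖z‖
  have hM : 0 ≤ max ‖a‖ ‖b‖ := (norm_nonneg a).trans (le_max_left _ _)
  have hr2 : 2 ≤ r := by nlinarith
  have hseg_far : ∀ y ∈ segment ℝ z w, r / 2 ≤ ‖y‖ := fun y hy => by
    linarith [norm_sub_norm_le z y, norm_sub_le_of_mem_segment hy, norm_sub_rev y z]
  have hw : r / 2 ≤ ‖w‖ := hseg_far w (right_mem_segment ℝ z w)
  have hs : 8 * max ‖a‖ ‖b‖ + 1 ≤ √(r / 2) :=
    Real.le_sqrt_of_sq_le (by linarith)
  have hsr : √(r / 2) ≤ √r := Real.sqrt_le_sqrt (by linarith)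
  have hsw : √(r / 2) ≤ √‖w‖ := Real.sqrt_le_sqrt hw
  have hs0 : 0 < √(r / 2) := by linarith
  have hlip := norm_csqrt_sub_le (by linarith) hseg hseg_far
  calc _ ≤ 8 * ‖a - b‖ * ‖csqrt w - csqrt z‖ / (‖csqrt z‖ * ‖csqrt w‖) :=
        abs_logRatio_sub_le (by rw [norm_csqrt]; linarith) (by rw [norm_csqrt]; linarith)
    _ ≤ 8 * ‖a - b‖ * (1 / (2 * √(r / 2))) / (√r * √(r / 2)) := by
        rw [norm_csqrt, norm_csqrt]
        gcongr
        exact hlip.trans (by gcongr)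
    _ = 8 * ‖a - b‖ / (r * √r) := by
        field_simp
        rw [Real.sq_sqrt (by linarith)]; ring

lemma summable_norm_rpow_neg_intProd {k : ℝ} (hk : 2 < k) :
    Summable (fun p : ℤ × ℤ => ‖p‖ ^ (-k)) := by
  refine ((finTwoArrowEquiv ℤ).symm.summable_iff.2
    (EisensteinSeries.summable_one_div_norm_rpow hk)).congr fun p => ?_
  simp [EisensteinSeries.norm_eq_max_natAbs, Prod.norm_def, Int.norm_eq_abs]

def latC (m : Z2) : ℂ := equivRealProd.symm (latpos m)

@[simp] lemma latC_re (m : Z2) : (latC m).re = m.1 - 1 / 2 := by simp [latC, latpos]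

@[simp] lemma latC_im (m : Z2) : (latC m).im = m.2 - 1 / 2 := by simp [latC, latpos]

lemma half_norm_le_norm_latC (m : Z2) : ‖m‖ / 2 ≤ ‖latC m‖ := by
  have half_le : ∀ k : ℤ, |(k : ℝ)| / 2 ≤ |(k : ℝ) - 1 / 2| := fun k => by
    rcases le_or_gt k 0 with hk | hk
    · have : (k : ℝ) ≤ 0 := by exact_mod_cast hk
      rw [abs_of_nonpos this, abs_of_neg (by linarith)]; linarith
    · have : (1 : ℝ) ≤ k := by exact_mod_cast hk
      rw [abs_of_pos (by linarith), abs_of_pos (by linarith)]; linarith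
  rw [Prod.norm_def, Int.norm_eq_abs, Int.norm_eq_abs, ← max_div_div_right zero_le_two,
    max_le_iff]
  exact ⟨(half_le m.1).trans (by simpa using abs_re_le_norm (latC m)),
    (half_le m.2).trans (by simpa using abs_im_le_norm (latC m))⟩

lemma Rm_subset_Rall (m : Z2) : Rm m ⊆ Rall := by
  unfold Rm; split_ifs <;> simp [Finset.erase_subset]

lemma norm_latC_add_sub_le {m ρ : Z2} (hρ : ρ ∈ Rm m) : ‖latC (m + ρ) - latC m‖ ≤ 1 := by
  have hρ := Rm_subset_Rall m hρ
  simp only [Rall, Finset.mem_insert, Finset.mem_singleton] at hρ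
  rcases hρ with rfl | rfl | rfl | rfl <;>
    simp [norm_eq_sqrt_sq_add_sq, latC_re, latC_im]

/-- `Rm` removes exactly the bonds crossing the crack: every remaining bond stays inside one of
the half-planes `im > 0`, `im < 0`, `re > 0` of the slit plane. -/
lemma Rm_bond_halfPlane {m ρ : Z2} (hρ : ρ ∈ Rm m) :
    (1 ≤ m.2 ∧ 1 ≤ (m + ρ).2) ∨ (m.2 ≤ 0 ∧ (m + ρ).2 ≤ 0) ∨ (1 ≤ m.1 ∧ 1 ≤ (m + ρ).1) := by
  obtain ⟨m₁, m₂⟩ := m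
  obtain ⟨ρ₁, ρ₂⟩ := ρ
  unfold Rm at hρ
  split_ifs at hρ <;>
    simp only [Rall, Finset.mem_erase, Finset.mem_insert, Finset.mem_singleton, ne_eq,
      Prod.mk.injEq] at hρ <;>
    simp only [Prod.mk_add_mk] at * <;> omega

lemma segment_latC_subset_slitPlane {m ρ : Z2} (hρ : ρ ∈ Rm m) :
    segment ℝ (latC m) (latC (m + ρ)) ⊆ slitPlane := by
  have pos_of_one_le {k : ℤ} (h : 1 ≤ k) : (0 : ℝ) < k - 1 / 2 := by
    have : (1 : ℝ) ≤ k := by exact_mod_cast h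
    linarith
  have neg_of_nonpos {k : ℤ} (h : k ≤ 0) : (k : ℝ) - 1 / 2 < 0 := by
    have : (k : ℝ) ≤ 0 := by exact_mod_cast h
    linarith
  rcases Rm_bond_halfPlane hρ with ⟨h₁, h₂⟩ | ⟨h₁, h₂⟩ | ⟨h₁, h₂⟩
  · refine ((convex_halfSpace_im_gt 0).segment_subset ?_ ?_).trans fun z hz => ?_
    · simpa using pos_of_one_le h₁
    · simpa using pos_of_one_le h₂
    · exact mem_slitPlane_iff.2 (Or.inr (ne_of_gt hz))
  · refine ((convex_halfSpace_im_lt 0).segment_subset ?_ ?_).trans fun z hz => ?_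
    · simpa using neg_of_nonpos h₁
    · simpa using neg_of_nonpos h₂
    · exact mem_slitPlane_iff.2 (Or.inr (ne_of_lt hz))
  · refine ((convex_halfSpace_re_gt 0).segment_subset ?_ ?_).trans fun z hz => ?_
    · simpa using pos_of_one_le h₁
    · simpa using pos_of_one_le h₂
    · exact mem_slitPlane_iff.2 (Or.inl hz)

lemma nrm_sub_eq_norm (p q : ℝ × ℝ) :
    nrm (p - q) = ‖equivRealProd.symm p - equivRealProd.symm q‖ := by
  simp [nrm, norm_eq_sqrt_sq_add_sq]

lemma equivRealProd_symm_omegaMap (x : ℝ × ℝ) :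
    equivRealProd.symm (omegaMap x) = csqrt (equivRealProd.symm x) := by
  have hnrm : nrm x = ‖equivRealProd.symm x‖ := by simpa using nrm_sub_eq_norm x 0
  rw [csqrt, show (1 / 2 : ℂ) = ((1 / 2 : ℝ) : ℂ) by norm_num]
  apply Complex.ext <;>
    simp only [cpow_ofReal_re, cpow_ofReal_im, equivRealProd_symm_apply, add_re, add_im,
      ofReal_re, ofReal_im, mul_re, mul_im, I_re, I_im] <;>
    simp [omegaMap, hnrm, Real.sqrt_eq_rpow, div_eq_mul_one_div (arg _)]

lemma equivRealProd_symm_omegaStar (x : ℝ × ℝ) :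
    equivRealProd.symm (omegaStar x) = -conj (csqrt (equivRealProd.symm x)) := by
  rw [← equivRealProd_symm_omegaMap]
  apply Complex.ext <;> simp [omegaStar]

lemma Ghat_eq_log_norm_csqrt (x s : ℝ × ℝ) :
    Ghat x s = -(1 / (2 * Real.pi * 2)) *
      (Real.log ‖csqrt (equivRealProd.symm x) - csqrt (equivRealProd.symm s)‖ +
        Real.log ‖csqrt (equivRealProd.symm x) - -conj (csqrt (equivRealProd.symm s))‖) := by
  rw [Ghat, nrm_sub_eq_norm, nrm_sub_eq_norm, equivRealProd_symm_omegaMap,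
    equivRealProd_symm_omegaMap, equivRealProd_symm_omegaStar]

lemma GhatD_comm (m s : Z2) : GhatD m s = GhatD s m := by
  unfold GhatD
  by_cases h : m = s
  · simp [h]
  · rw [if_neg h, if_neg (Ne.symm h), Ghat_eq_log_norm_csqrt, Ghat_eq_log_norm_csqrt,
      norm_sub_rev (csqrt _)]
    congr 3
    rw [← norm_conj]
    congr 1
    simp only [map_sub, map_neg, conj_conj]
    ring

lemma GhatD_sub_GhatD_xhat_eq {m t : Z2} (hmt : m ≠ t) (hmx : m ≠ xhat) :
    GhatD m t - GhatD m xhat = -(1 / (2 * Real.pi * 2)) *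
      (logRatio (csqrt (latC t)) (csqrt (latC xhat)) (csqrt (latC m)) +
        logRatio (-conj (csqrt (latC t))) (-conj (csqrt (latC xhat))) (csqrt (latC m))) := by
  rw [GhatD, GhatD, if_neg hmt, if_neg hmx, Ghat_eq_log_norm_csqrt, Ghat_eq_log_norm_csqrt]
  simp only [logRatio, latC]
  ring

lemma abs_GhatD_sub_bond_le {t m ρ : Z2} (hρ : ρ ∈ Rm m) (hmt : m ≠ t) (hmx : m ≠ xhat)
    (hmt' : m + ρ ≠ t) (hmx' : m + ρ ≠ xhat)
    (hm : 2 * (8 * max ‖csqrt (latC t)‖ ‖csqrt (latC xhat)‖ + 1) ^ 2 ≤ ‖latC m‖) :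
    |(GhatD (m + ρ) t - GhatD (m + ρ) xhat) - (GhatD m t - GhatD m xhat)| ≤
      16 * ‖csqrt (latC t) - csqrt (latC xhat)‖ / (‖latC m‖ * √‖latC m‖) := by
  set a := csqrt (latC t)
  set b := csqrt (latC xhat)
  have hab_conj : ‖-conj a - -conj b‖ = ‖a - b‖ := by
    rw [show -conj a - -conj b = -conj (a - b) by rw [map_sub]; ring, norm_neg, norm_conj]
  have h₁ := abs_logRatio_csqrt_sub_le (segment_latC_subset_slitPlane hρ)
    (norm_latC_add_sub_le hρ) hm
  have h₂ := abs_logRatio_csqrt_sub_le (a := -conj a) (b := -conj b)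
    (segment_latC_subset_slitPlane hρ) (norm_latC_add_sub_le hρ) (by simpa using hm)
  rw [hab_conj] at h₂
  have hc : 0 < 1 / (2 * Real.pi * 2) := by positivity
  have hc1 : 1 / (2 * Real.pi * 2) ≤ 1 := by
    rw [div_le_one (by positivity)]; linarith [Real.pi_gt_three]
  rw [GhatD_sub_GhatD_xhat_eq hmt hmx, GhatD_sub_GhatD_xhat_eq hmt' hmx', ← mul_sub, abs_mul,
    abs_neg, abs_of_pos hc, add_sub_add_comm]
  calc _ ≤ 1 * (8 * ‖a - b‖ / (‖latC m‖ * √‖latC m‖) + 8 * ‖a - b‖ / (‖latC m‖ * √‖latC m‖)) := by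
        gcongr
        exact (abs_add_le _ _).trans (add_le_add h₁ h₂)
    _ = 16 * ‖a - b‖ / (‖latC m‖ * √‖latC m‖) := by ring

lemma abs_Dg_GhatD_sub_le (t : Z2) : ∃ C R : ℝ, 0 ≤ C ∧ ∀ m ρ, R ≤ ‖latC m‖ →
    |Dg (fun m => GhatD m t - GhatD m xhat) m ρ| ≤ C / (‖latC m‖ * √‖latC m‖) := by
  set M := max ‖csqrt (latC t)‖ ‖csqrt (latC xhat)‖
  refine ⟨16 * ‖csqrt (latC t) - csqrt (latC xhat)‖,
    2 * (8 * M + 1) ^ 2 + ‖latC t‖ + ‖latC xhat‖ + 2, by positivity, fun m ρ hm => ?_⟩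
  set r := ‖latC m‖
  have hM : 0 ≤ M := (norm_nonneg _).trans (le_max_left _ _)
  unfold Dg
  split_ifs with hρ
  swap
  · simp only [abs_zero]; positivity
  have far : ∀ n, r - 1 ≤ ‖latC n‖ → n ≠ t ∧ n ≠ xhat := fun n hn => by
    constructor <;> intro h <;> rw [h] at hn <;>
      linarith [norm_nonneg (latC t), norm_nonneg (latC xhat), sq_nonneg (8 * M + 1)]
  have hstep : r - 1 ≤ ‖latC (m + ρ)‖ := by
    linarith [norm_sub_norm_le (latC m) (latC (m + ρ)), norm_latC_add_sub_le hρ,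
      norm_sub_rev (latC m) (latC (m + ρ))]
  obtain ⟨hmt, hmx⟩ := far m (by linarith)
  obtain ⟨hmt', hmx'⟩ := far (m + ρ) hstep
  exact abs_GhatD_sub_bond_le hρ hmt hmx hmt' hmx'
    (by linarith [norm_nonneg (latC t), norm_nonneg (latC xhat)])

lemma summable_gradSq_GhatD_sub (t : Z2) :
    Summable (gradSq (fun m => GhatD m t - GhatD m xhat)) := by
  obtain ⟨C, R, hC, hbound⟩ := abs_Dg_GhatD_sub_le t
  refine Summable.of_norm_bounded_eventually
    ((summable_norm_rpow_neg_intProd (k := 3) (by norm_num)).mul_left (32 * C ^ 2)) ?_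
  have hfar : ∀ᶠ m : Z2 in cofinite, max (2 * R) 2 ≤ ‖m‖ := by
    rw [← cocompact_eq_cofinite]
    exact tendsto_norm_cocompact_atTop.eventually_ge_atTop _
  filter_upwards [hfar] with m hm
  set r := ‖latC m‖
  have hmr : ‖m‖ / 2 ≤ r := half_norm_le_norm_latC m
  have hm0 : 0 < ‖m‖ := by linarith [le_max_right (2 * R) 2]
  have hsq : (C / (r * √r)) ^ 2 = C ^ 2 / r ^ 3 := by
    rw [div_pow, mul_pow, Real.sq_sqrt (by positivity)]; ring
  rw [Real.norm_of_nonneg (gradSq_nonneg _ _), Real.rpow_neg (norm_nonneg _),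
    show (3 : ℝ) = ((3 : ℕ) : ℝ) by norm_num, Real.rpow_natCast]
  calc gradSq _ m ≤ Rall.card • (C / (r * √r)) ^ 2 := by
        refine Finset.sum_le_card_nsmul _ _ _ fun ρ _ => ?_
        have := hbound m ρ (by linarith [le_max_left (2 * R) 2])
        rw [← sq_abs]
        gcongr
    _ = 4 * C ^ 2 / r ^ 3 := by rw [hsq, show Rall.card = 4 by rfl, nsmul_eq_mul]; ring
    _ ≤ 4 * C ^ 2 / (‖m‖ / 2) ^ 3 := by gcongr
    _ = 32 * C ^ 2 * (‖m‖ ^ 3)⁻¹ := by field_simp; ring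

/-- **Statement 15.** The corrector satisfies `𝒢̃(m,s) + 𝒢̃(s,x̂) = 𝒢̃(s,m) + 𝒢̃(m,x̂)`;
hence `𝒢̄(m,s) := 𝒢̃(m,s) + 𝒢̃(s,x̂)` is symmetric and satisfies the same variational
equation in each variable. -/
theorem corrector_symmetrisation
    (Gt : Z2 → Z2 → ℝ)
    (hGt : ∀ s : Z2, memH1 (fun m => Gt m s) ∧ varEq s (fun m => Gt m s)) :
    (∀ m s : Z2, Gt m s + Gt s xhat = Gt s m + Gt m xhat) ∧
    (∀ s : Z2, Summable (gradSq (fun m => Gt m s + Gt s xhat)) ∧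
      varEq s (fun m => Gt m s + Gt s xhat)) ∧
    (∀ m : Z2, Summable (gradSq (fun s' => Gt m s' + Gt s' xhat)) ∧
      varEq m (fun s' => Gt m s' + Gt s' xhat)) := by
  have hsymm (m s : Z2) : Gt m s + Gt s xhat = Gt s m + Gt m xhat := by
    have hfull := green_diff_symm (fun m s => GhatD m s + Gt m s)
      (fun s _ hv => (hGt s).2.hasSum_dotD hv)
      (fun a => by
        simpa only [add_sub_add_comm] using
          (summable_gradSq_GhatD_sub a).gradSq_add ((hGt a).1.1.gradSq_sub (hGt xhat).1.1))
      m s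
    have hx (a : Z2) : Gt xhat a = 0 := (hGt a).1.2
    linarith [hx s, hx m, hx xhat, GhatD_comm m s, GhatD_comm m xhat, GhatD_comm s xhat]
  have hshift (a : Z2) (c : ℝ) :
      Summable (gradSq (fun m => Gt m a + c)) ∧ varEq a (fun m => Gt m a + c) :=
    ⟨by rw [gradSq_add_const (fun m => Gt m a)]; exact (hGt a).1.1, varEq_add_const (hGt a).2 c⟩
  refine ⟨hsymm, fun s => hshift s _, fun m => ?_⟩
  simpa only [hsymm m] using hshift m (Gt m xhat)
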